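/- arXiv:2508.18980 — 2 statements merged into one kernel-verified Lean document; each statement's English description precedes it below -/
import Mathlib

section
/- (Hardy inequality) Let 1 < p < ∞ and f ∈ L^p(0,∞). Then the averaged function F(y) = (1/y)∫₀^y f(t) dt satisfies ∫₀^∞ |F(y)|^p dy ≤ (p/(p−1))^p ∫₀^∞ |f(y)|^p dy. -/
/-!
Write `q = p / (p - 1)`. Hölder's inequality with the weight `t ^ (1 - 1/p)` gives
`(∫₀^y φ) ^ p ≤ (q y ^ (1 - 1/p)) ^ (p - 1) ∫₀^y φ ^ p t ^ (1 - 1/p)`.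
Dividing by `y ^ p`, integrating over `y > 0` and exchanging the order of integration, the
inner integral `∫_t^∞ y ^ (1/p - 2) dy = q t ^ (1/p - 1)` exactly cancels the weight, which leaves
`q ^ p ∫₀^∞ φ ^ p`. The argument runs on lower Lebesgue integrals of `φ = ‖f‖ₑ`, which dominate
the Bochner integrals of the statement.
-/

open MeasureTheory Set
open scoped ENNReal

theorem lintegral_Ioc_zero_ofReal_rpow {r y : ℝ} (hr : -1 < r) (hy : 0 ≤ y) :
    ∫⁻ t in Ioc 0 y, ENNReal.ofReal (t ^ r) = ENNReal.ofReal (y ^ (r + 1) / (r + 1)) := by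
  rw [← ofReal_integral_eq_lintegral_ofReal (intervalIntegral.intervalIntegrable_rpow' hr).1
      ((ae_restrict_iff' measurableSet_Ioc).2 (ae_of_all _ fun t ht => Real.rpow_nonneg ht.1.le _)),
    ← intervalIntegral.integral_of_le hy, integral_rpow (.inl hr), Real.zero_rpow (by linarith),
    sub_zero]

theorem lintegral_Ioi_ofReal_rpow {r c : ℝ} (hr : r < -1) (hc : 0 < c) :
    ∫⁻ t in Ioi c, ENNReal.ofReal (t ^ r) = ENNReal.ofReal (-c ^ (r + 1) / (r + 1)) := by
  rw [← ofReal_integral_eq_lintegral_ofReal (integrableOn_Ioi_rpow_of_lt hr hc)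
      ((ae_restrict_iff' measurableSet_Ioi).2
        (ae_of_all _ fun t ht => Real.rpow_nonneg (hc.trans ht).le _)),
    integral_Ioi_rpow_of_lt hr hc]

theorem lintegral_Ioi_mul_lintegral_Ioc_swap {w ψ : ℝ → ℝ≥0∞}
    (hw : AEMeasurable w (volume.restrict (Ioi 0)))
    (hψ : AEMeasurable ψ (volume.restrict (Ioi 0))) :
    ∫⁻ y in Ioi 0, w y * ∫⁻ t in Ioc 0 y, ψ t = ∫⁻ t in Ioi 0, ψ t * ∫⁻ y in Ici t, w y := by
  have inner_Ioc : ∀ y, ∫⁻ t in Ioi 0, (Iic y).indicator (fun t => w y * ψ t) t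
      = w y * ∫⁻ t in Ioc 0 y, ψ t := by
    intro y
    rw [lintegral_indicator measurableSet_Iic, Measure.restrict_restrict measurableSet_Iic,
      Iic_inter_Ioi, lintegral_const_mul'' _
        (hψ.mono_measure (Measure.restrict_mono Ioc_subset_Ioi_self le_rfl))]
  have inner_Ici : ∀ t ∈ Ioi (0 : ℝ), ∫⁻ y in Ioi 0, (Ici t).indicator (fun y => w y * ψ t) y
      = ψ t * ∫⁻ y in Ici t, w y := by
    intro t ht
    have hIci : Ici t ⊆ Ioi 0 := Ici_subset_Ioi.2 ht
    rw [lintegral_indicator measurableSet_Ici, Measure.restrict_restrict measurableSet_Ici,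
      inter_eq_left.2 hIci,
      lintegral_mul_const'' _ (hw.mono_measure (Measure.restrict_mono hIci le_rfl)), mul_comm]
  have hmeas : AEMeasurable (Function.uncurry fun y t => (Iic y).indicator (fun t => w y * ψ t) t)
      ((volume.restrict (Ioi (0 : ℝ))).prod (volume.restrict (Ioi 0))) := by
    convert (hw.comp_fst.mul hψ.comp_snd).indicator
      (measurableSet_le measurable_snd measurable_fst) using 1
    ext ⟨y, t⟩
    simp [indicator_apply]
  calc ∫⁻ y in Ioi 0, w y * ∫⁻ t in Ioc 0 y, ψ t
      = ∫⁻ y in Ioi 0, ∫⁻ t in Ioi 0, (Iic y).indicator (fun t => w y * ψ t) t := by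
        simp_rw [inner_Ioc]
    _ = ∫⁻ t in Ioi 0, ∫⁻ y in Ioi 0, (Ici t).indicator (fun y => w y * ψ t) y := by
        rw [lintegral_lintegral_swap hmeas]
        simp only [indicator_apply, mem_Iic, mem_Ici]
    _ = ∫⁻ t in Ioi 0, ψ t * ∫⁻ y in Ici t, w y :=
        setLIntegral_congr_fun measurableSet_Ioi inner_Ici

theorem rpow_lintegral_Ioc_zero_le {p y : ℝ} (hp : 1 < p) (hy : 0 < y) {φ : ℝ → ℝ≥0∞}
    (hφ : AEMeasurable φ (volume.restrict (Ioc 0 y))) :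
    (∫⁻ t in Ioc 0 y, φ t) ^ p ≤ ENNReal.ofReal (p / (p - 1) * y ^ (1 - 1 / p)) ^ (p - 1) *
      ∫⁻ t in Ioc 0 y, φ t ^ p * ENNReal.ofReal (t ^ (1 - 1 / p)) := by
  have hp0 : 0 < p := by linarith
  have hp' : 0 < 1 - 1 / p := by rw [sub_pos, div_lt_one hp0]; exact hp
  have hsplit : ∀ t ∈ Ioc 0 y, φ t = (φ t ^ p * ENNReal.ofReal (t ^ (1 - 1 / p))) ^ (1 / p)
      * ENNReal.ofReal (t ^ (-(1 / p))) ^ (1 - 1 / p) := by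
    intro t ht
    have ht0 : 0 ≤ t := ht.1.le
    rw [ENNReal.mul_rpow_of_nonneg _ _ (by positivity), ← ENNReal.rpow_mul,
      mul_one_div_cancel hp0.ne', ENNReal.rpow_one, mul_assoc,
      ENNReal.ofReal_rpow_of_nonneg (Real.rpow_nonneg ht0 _) (by positivity),
      ENNReal.ofReal_rpow_of_nonneg (Real.rpow_nonneg ht0 _) hp'.le, ← Real.rpow_mul ht0,
      ← Real.rpow_mul ht0, ← ENNReal.ofReal_mul (Real.rpow_nonneg ht0 _), ← Real.rpow_add ht.1,
      show (1 - 1 / p) * (1 / p) + -(1 / p) * (1 - 1 / p) = 0 by ring, Real.rpow_zero,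
      ENNReal.ofReal_one, mul_one]
  have hweight : ∫⁻ t in Ioc 0 y, ENNReal.ofReal (t ^ (-(1 / p)))
      = ENNReal.ofReal (p / (p - 1) * y ^ (1 - 1 / p)) := by
    rw [lintegral_Ioc_zero_ofReal_rpow (by rw [neg_lt_neg_iff, div_lt_one hp0]; exact hp) hy.le,
      neg_add_eq_sub]
    congr 1
    field_simp
  have holder : ∫⁻ t in Ioc 0 y, φ t
      ≤ (∫⁻ t in Ioc 0 y, φ t ^ p * ENNReal.ofReal (t ^ (1 - 1 / p))) ^ (1 / p)
        * ENNReal.ofReal (p / (p - 1) * y ^ (1 - 1 / p)) ^ (1 - 1 / p) := by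
    rw [setLIntegral_congr_fun measurableSet_Ioc hsplit, ← hweight]
    exact ENNReal.lintegral_mul_norm_pow_le (by fun_prop) (by fun_prop) (by positivity) hp'.le
      (by ring)
  calc (∫⁻ t in Ioc 0 y, φ t) ^ p
      ≤ ((∫⁻ t in Ioc 0 y, φ t ^ p * ENNReal.ofReal (t ^ (1 - 1 / p))) ^ (1 / p)
          * ENNReal.ofReal (p / (p - 1) * y ^ (1 - 1 / p)) ^ (1 - 1 / p)) ^ p :=
        ENNReal.rpow_le_rpow holder hp0.le
    _ = _ := by
        rw [ENNReal.mul_rpow_of_nonneg _ _ hp0.le, ← ENNReal.rpow_mul, ← ENNReal.rpow_mul,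
          one_div_mul_cancel hp0.ne', ENNReal.rpow_one, mul_comm,
          show (1 - 1 / p) * p = p - 1 by field_simp]

theorem div_rpow_lintegral_Ioc_zero_le {p y : ℝ} (hp : 1 < p) (hy : 0 < y) {φ : ℝ → ℝ≥0∞}
    (hφ : AEMeasurable φ (volume.restrict (Ioc 0 y))) :
    ((∫⁻ t in Ioc 0 y, φ t) / ENNReal.ofReal y) ^ p ≤
      ENNReal.ofReal ((p / (p - 1)) ^ (p - 1)) * (ENNReal.ofReal (y ^ (1 / p - 2)) *
        ∫⁻ t in Ioc 0 y, φ t ^ p * ENNReal.ofReal (t ^ (1 - 1 / p))) := by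
  have hp0 : 0 < p := by linarith
  have hq : 0 < p / (p - 1) := div_pos hp0 (by linarith)
  have hexp : (p / (p - 1) * y ^ (1 - 1 / p)) ^ (p - 1) / y ^ p
      = (p / (p - 1)) ^ (p - 1) * y ^ (1 / p - 2) := by
    rw [Real.mul_rpow hq.le (by positivity), ← Real.rpow_mul hy.le, mul_div_assoc,
      ← Real.rpow_sub hy]
    congr 2
    field_simp
    ring
  calc ((∫⁻ t in Ioc 0 y, φ t) / ENNReal.ofReal y) ^ p
      ≤ ENNReal.ofReal (p / (p - 1) * y ^ (1 - 1 / p)) ^ (p - 1)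
        * (∫⁻ t in Ioc 0 y, φ t ^ p * ENNReal.ofReal (t ^ (1 - 1 / p)))
        / ENNReal.ofReal y ^ p := by
        rw [ENNReal.div_rpow_of_nonneg _ _ hp0.le]
        gcongr
        exact rpow_lintegral_Ioc_zero_le hp hy hφ
    _ = _ := by
        rw [ENNReal.ofReal_rpow_of_nonneg (by positivity) (by linarith),
          ENNReal.ofReal_rpow_of_nonneg hy.le hp0.le, ENNReal.mul_div_right_comm,
          ← ENNReal.ofReal_div_of_pos (by positivity), hexp,
          ENNReal.ofReal_mul (by positivity), mul_assoc]

theorem ofReal_rpow_mul_lintegral_Ici_ofReal_rpow {p t : ℝ} (hp : 1 < p) (ht : 0 < t) :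
    ENNReal.ofReal (t ^ (1 - 1 / p)) * ∫⁻ y in Ici t, ENNReal.ofReal (y ^ (1 / p - 2))
      = ENNReal.ofReal (p / (p - 1)) := by
  have hp0 : 0 < p := by linarith
  have hexp : 1 / p - 2 < -1 := by linarith [(div_lt_one hp0).2 hp]
  rw [← restrict_Ioi_eq_restrict_Ici, lintegral_Ioi_ofReal_rpow hexp ht,
    ← ENNReal.ofReal_mul (by positivity), mul_div_assoc', mul_neg, ← Real.rpow_add ht,
    show 1 - 1 / p + (1 / p - 2 + 1) = 0 by ring, Real.rpow_zero,
    show 1 / p - 2 + 1 = -((p - 1) / p) by field_simp; ring]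
  congr 1
  field_simp

theorem lintegral_hardy {p : ℝ} (hp : 1 < p) {φ : ℝ → ℝ≥0∞}
    (hφ : AEMeasurable φ (volume.restrict (Ioi 0))) :
    ∫⁻ y in Ioi 0, ((∫⁻ t in Ioc 0 y, φ t) / ENNReal.ofReal y) ^ p ≤
      ENNReal.ofReal (p / (p - 1)) ^ p * ∫⁻ t in Ioi 0, φ t ^ p := by
  have hp0 : 0 < p := by linarith
  have hq : 0 < p / (p - 1) := div_pos hp0 (by linarith)
  have htail : ∀ t ∈ Ioi (0 : ℝ), φ t ^ p * ENNReal.ofReal (t ^ (1 - 1 / p)) *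
      ∫⁻ y in Ici t, ENNReal.ofReal (y ^ (1 / p - 2)) = ENNReal.ofReal (p / (p - 1)) * φ t ^ p :=
    fun t ht => by rw [mul_assoc, ofReal_rpow_mul_lintegral_Ici_ofReal_rpow hp ht, mul_comm]
  calc ∫⁻ y in Ioi 0, ((∫⁻ t in Ioc 0 y, φ t) / ENNReal.ofReal y) ^ p
      ≤ ∫⁻ y in Ioi 0, ENNReal.ofReal ((p / (p - 1)) ^ (p - 1)) *
          (ENNReal.ofReal (y ^ (1 / p - 2)) *
            ∫⁻ t in Ioc 0 y, φ t ^ p * ENNReal.ofReal (t ^ (1 - 1 / p))) :=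
        setLIntegral_mono' measurableSet_Ioi fun y hy => div_rpow_lintegral_Ioc_zero_le hp hy
          (hφ.mono_measure (Measure.restrict_mono Ioc_subset_Ioi_self le_rfl))
    _ = ENNReal.ofReal ((p / (p - 1)) ^ (p - 1)) *
          ∫⁻ t in Ioi 0, φ t ^ p * ENNReal.ofReal (t ^ (1 - 1 / p)) *
            ∫⁻ y in Ici t, ENNReal.ofReal (y ^ (1 / p - 2)) := by
        rw [lintegral_const_mul' _ _ ENNReal.ofReal_ne_top,
          lintegral_Ioi_mul_lintegral_Ioc_swap (by fun_prop) (by fun_prop)]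
    _ = ENNReal.ofReal (p / (p - 1)) ^ p * ∫⁻ t in Ioi 0, φ t ^ p := by
        rw [setLIntegral_congr_fun measurableSet_Ioi htail,
          lintegral_const_mul' _ _ ENNReal.ofReal_ne_top, ← mul_assoc,
          ← ENNReal.ofReal_mul (by positivity), ← Real.rpow_add_one hq.ne', sub_add_cancel,
          ENNReal.ofReal_rpow_of_nonneg hq.le hp0.le]

theorem ofReal_abs_rpow_eq_enorm_rpow {p : ℝ} (hp : 0 ≤ p) (x : ℝ) :
    ENNReal.ofReal (|x| ^ p) = ‖x‖ₑ ^ p := by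
  rw [← ENNReal.ofReal_rpow_of_nonneg (abs_nonneg x) hp, Real.enorm_eq_ofReal_abs]

theorem AEMeasurable.enorm_of_abs_rpow {α : Type*} [MeasurableSpace α] {μ : Measure α}
    {f : α → ℝ} {p : ℝ} (hp : 0 < p) (hf : AEMeasurable (fun x => |f x| ^ p) μ) :
    AEMeasurable (fun x => ‖f x‖ₑ) μ := by
  refine (hf.ennreal_ofReal.pow_const (1 / p)).congr (ae_of_all _ fun x => ?_)
  dsimp only
  rw [ofReal_abs_rpow_eq_enorm_rpow hp.le, ← ENNReal.rpow_mul, mul_one_div_cancel hp.ne',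
    ENNReal.rpow_one]

theorem integral_le_toReal_lintegral_ofReal {α : Type*} [MeasurableSpace α] {μ : Measure α}
    {g : α → ℝ} (hg : ∀ x, 0 ≤ g x) :
    ∫ x, g x ∂μ ≤ (∫⁻ x, ENNReal.ofReal (g x) ∂μ).toReal := by
  refine (Real.le_norm_self _).trans ((norm_integral_le_lintegral_norm _).trans_eq ?_)
  simp only [Real.norm_eq_abs, abs_of_nonneg (hg _)]

theorem hardy_inequality_general (p : ℝ) (hp : 1 < p) (f : ℝ → ℝ)
    (hf : IntegrableOn (fun y => |f y| ^ p) (Set.Ioi 0)) :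
    ∫ y in Set.Ioi (0:ℝ), |(∫ t in Set.Ioc (0:ℝ) y, f t) / y| ^ p
      ≤ (p / (p - 1)) ^ p * ∫ y in Set.Ioi (0:ℝ), |f y| ^ p := by
  have hp0 : 0 < p := by linarith
  have hpointwise : ∀ y ∈ Ioi (0 : ℝ), ENNReal.ofReal (|(∫ t in Ioc 0 y, f t) / y| ^ p) ≤
      ((∫⁻ t in Ioc 0 y, ‖f t‖ₑ) / ENNReal.ofReal y) ^ p := by
    intro y (hy : 0 < y)
    rw [abs_div, abs_of_pos hy, ← ENNReal.ofReal_rpow_of_nonneg (by positivity) hp0.le,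
      ENNReal.ofReal_div_of_pos hy, ← Real.enorm_eq_ofReal_abs]
    gcongr
    exact enorm_integral_le_lintegral_enorm _
  have hlintegral : ∫⁻ y in Ioi 0, ENNReal.ofReal (|(∫ t in Ioc 0 y, f t) / y| ^ p)
      ≤ ENNReal.ofReal ((p / (p - 1)) ^ p * ∫ y in Ioi 0, |f y| ^ p) := by
    rw [ENNReal.ofReal_mul (by positivity), ← ENNReal.ofReal_rpow_of_nonneg (by positivity) hp0.le,
      ofReal_integral_eq_lintegral_ofReal hf (ae_of_all _ fun t => by positivity),
      lintegral_congr fun t => ofReal_abs_rpow_eq_enorm_rpow hp0.le (f t)]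
    exact (setLIntegral_mono' measurableSet_Ioi hpointwise).trans
      (lintegral_hardy hp (hf.aemeasurable.enorm_of_abs_rpow hp0))
  exact (integral_le_toReal_lintegral_ofReal fun y => by positivity).trans
    (ENNReal.toReal_le_of_le_ofReal (by positivity) hlintegral)

/-- Hardy's inequality: for `1 < p < ∞` and `f ∈ L^p(0,∞)`, the Hardy average
`F(y) = (1/y)∫₀^y f` satisfies `∫₀^∞ |F|^p ≤ (p/(p-1))^p ∫₀^∞ |f|^p`. -/
theorem hardy_inequality (p : ℝ) (hp : 1 < p) (f : ℝ → ℝ)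
    (hmeas : Measurable f)
    (hf : IntegrableOn (fun y => |f y| ^ p) (Set.Ioi 0)) :
    ∫ y in Set.Ioi (0:ℝ), |(∫ t in Set.Ioc (0:ℝ) y, f t) / y| ^ p
      ≤ (p / (p - 1)) ^ p * ∫ y in Set.Ioi (0:ℝ), |f y| ^ p :=
  hardy_inequality_general p hp f hf
end

section
/- Let W ∈ H¹(ℝ²₊) vanish at y = 0 (trace zero), and let w^b(x,z) be a smooth function with ‖⟨z⟩ ∂_z w^b‖_{L^∞} < ∞, evaluated at z = y/√ε for ε > 0. Then for any vector field U = (U₁,U₂) ∈ H¹(ℝ²₊)² with U₂(x,0) = 0, the integral ∫_{ℝ²₊} U₂(x,y) · ε^{-1/2} ∂_z w^b(x, y/√ε) · W(x,y) dx dy is bounded in absolute value by ‖∂_y U₂‖_{L²(ℝ²₊)} · ‖⟨z⟩∂_z w^b‖_{L^∞} · ‖W‖_{L²(ℝ²₊)}, uniformly in ε. -/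
/-!
Since `U₂(x, 0) = 0`, `|U₂(x, y)| ≤ ∫₀^y |∂_y U₂(x, t)| dt`, and since `z ≤ ⟨z⟩`, the
boundary-layer weight obeys `|ε^{-1/2} ∂_z w^b(x, y/√ε)| = |z ∂_z w^b(x, z)| / y ≤ M / y` with
`z = y/√ε`, uniformly in `ε`. What remains is Hardy's inequality in bilinear form,
`∫₀^∞ (∫₀^y |a|) |b(y)| / y dy ≤ l ‖a‖² + l⁻¹ ‖b‖²` for every `l > 0`, proved by the Schur test:
a weighted AM–GM splits `|a(t)| |b(y)| / y` against the kernels `√t / (2 y √y)` and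
`1 / (2 √t √y)`, which integrate to `1` in `y > t` and in `t < y` respectively. Optimising in `l`
gives the constant `2`.
-/

open MeasureTheory Set Filter Topology
open scoped ENNReal

theorem measurable_of_hasDerivAt {U g : ℝ → ℝ} (hU : ∀ t, HasDerivAt U (g t) t) :
    Measurable g := by
  have : deriv U = g := funext fun t => (hU t).deriv
  exact this ▸ measurable_deriv U

theorem enorm_sub_le_setLIntegral_Ioc_of_hasDerivAt {U g : ℝ → ℝ}
    (hU : ∀ t, HasDerivAt U (g t) t) {a b : ℝ} (hab : a ≤ b) :
    ‖U b - U a‖ₑ ≤ ∫⁻ t in Ioc a b, ‖g t‖ₑ := by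
  by_cases hfin : ∫⁻ t in Ioc a b, ‖g t‖ₑ = ∞
  · simp [hfin]
  have hint : IntervalIntegrable g volume a b :=
    (intervalIntegrable_iff_integrableOn_Ioc_of_le hab).2
      ⟨(measurable_of_hasDerivAt hU).aestronglyMeasurable, lt_top_iff_ne_top.2 hfin⟩
  rw [← intervalIntegral.integral_eq_sub_of_hasDerivAt (fun t _ => hU t) hint,
    intervalIntegral.integral_of_le hab]
  exact enorm_integral_le_lintegral_enorm _

theorem abs_mul_abs_div_le_schur_weights {l t y : ℝ} (hl : 0 < l) (ht : 0 < t) (hy : 0 < y)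
    (u w : ℝ) :
    |u| * |w| / y ≤
      l * u ^ 2 * (√t / (2 * y * √y)) + l⁻¹ * w ^ 2 * (1 / (2 * √t * √y)) := by
  obtain ⟨s, hs, rfl⟩ : ∃ s, 0 < s ∧ t = s ^ 2 :=
    ⟨√t, Real.sqrt_pos.2 ht, (Real.sq_sqrt ht.le).symm⟩
  obtain ⟨r, hr, rfl⟩ : ∃ r, 0 < r ∧ y = r ^ 2 :=
    ⟨√y, Real.sqrt_pos.2 hy, (Real.sq_sqrt hy.le).symm⟩
  rw [Real.sqrt_sq hs.le, Real.sqrt_sq hr.le, ← sq_abs u, ← sq_abs w]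
  field_simp
  nlinarith [sq_nonneg (l * s * |u| - r * |w|), abs_nonneg u, abs_nonneg w]

theorem enorm_mul_enorm_div_le_schur_weights {l t y : ℝ} (hl : 0 < l) (ht : 0 < t) (hy : 0 < y)
    (u w : ℝ) :
    ‖u‖ₑ * ‖w / y‖ₑ ≤
      ENNReal.ofReal l * ENNReal.ofReal (u ^ 2) * ENNReal.ofReal (√t / (2 * y * √y)) +
        ENNReal.ofReal l⁻¹ * ENNReal.ofReal (w ^ 2) * ENNReal.ofReal (1 / (2 * √t * √y)) := by
  rw [← enorm_mul, Real.enorm_eq_ofReal_abs, ← ENNReal.ofReal_mul hl.le,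
    ← ENNReal.ofReal_mul (by positivity), ← ENNReal.ofReal_mul (by positivity),
    ← ENNReal.ofReal_mul (by positivity), ← ENNReal.ofReal_add (by positivity) (by positivity),
    abs_mul, abs_div, abs_of_pos hy, ← mul_div_assoc]
  exact ENNReal.ofReal_le_ofReal (abs_mul_abs_div_le_schur_weights hl ht hy u w)

theorem lintegral_Ioo_ofReal_inv_two_sqrt_mul_sqrt {y : ℝ} (hy : 0 < y) :
    ∫⁻ t in Ioo 0 y, ENNReal.ofReal (1 / (2 * √t * √y)) = 1 := by
  have heq : ∀ t ∈ Ioo 0 y, 1 / (2 * √t * √y) = (2 * √y)⁻¹ * t ^ (-(1 / 2) : ℝ) := by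
    intro t ht
    rw [Real.rpow_neg ht.1.le, ← Real.sqrt_eq_rpow]
    field_simp
  have hint : IntegrableOn (fun t : ℝ => t ^ (-(1 / 2) : ℝ)) (Ioo 0 y) :=
    (intervalIntegrable_iff_integrableOn_Ioo_of_le hy.le).1
      (intervalIntegral.intervalIntegrable_rpow' (by norm_num))
  rw [setLIntegral_congr_fun measurableSet_Ioo (fun t ht => by rw [heq t ht]),
    ← ofReal_integral_eq_lintegral_ofReal (hint.const_mul _)
      ((ae_restrict_iff' measurableSet_Ioo).2 (ae_of_all _ fun t ht => by
        have := ht.1; positivity)),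
    integral_const_mul, ← integral_Ioc_eq_integral_Ioo, ← intervalIntegral.integral_of_le hy.le,
    integral_rpow (Or.inl (by norm_num)), Real.zero_rpow (by norm_num), sub_zero,
    show -(1 / 2 : ℝ) + 1 = 1 / 2 by norm_num, ← Real.sqrt_eq_rpow]
  have := Real.sqrt_pos.2 hy
  field_simp
  simp

theorem lintegral_Ioi_ofReal_sqrt_div_two_mul_mul_sqrt {t : ℝ} (ht : 0 < t) :
    ∫⁻ y in Ioi t, ENNReal.ofReal (√t / (2 * y * √y)) = 1 := by
  have heq : ∀ y ∈ Ioi t, √t / (2 * y * √y) = (√t / 2) * y ^ (-(3 / 2) : ℝ) := by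
    intro y hy
    have hy0 : 0 < y := ht.trans hy
    rw [Real.rpow_neg hy0.le, show (3 / 2 : ℝ) = 1 + 1 / 2 by norm_num, Real.rpow_add hy0,
      Real.rpow_one, ← Real.sqrt_eq_rpow]
    field_simp
  have hint : IntegrableOn (fun y : ℝ => y ^ (-(3 / 2) : ℝ)) (Ioi t) :=
    integrableOn_Ioi_rpow_of_lt (by norm_num) ht
  rw [setLIntegral_congr_fun measurableSet_Ioi (fun y hy => by rw [heq y hy]),
    ← ofReal_integral_eq_lintegral_ofReal (hint.const_mul _)
      ((ae_restrict_iff' measurableSet_Ioi).2 (ae_of_all _ fun y hy => by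
        have : 0 < y := ht.trans hy; positivity)),
    integral_const_mul, integral_Ioi_rpow_of_lt (by norm_num) ht,
    show -(3 / 2 : ℝ) + 1 = -(1 / 2) by norm_num, Real.rpow_neg ht.le, ← Real.sqrt_eq_rpow]
  have := Real.sqrt_pos.2 ht
  field_simp
  simp

theorem lintegral_Ioi_lintegral_Ioo_comm {F : ℝ → ℝ → ℝ≥0∞}
    (hF : Measurable (Function.uncurry F)) :
    ∫⁻ y in Ioi 0, ∫⁻ t in Ioo 0 y, F t y = ∫⁻ t in Ioi 0, ∫⁻ y in Ioi t, F t y := by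
  let G : ℝ → ℝ → ℝ≥0∞ := fun t y => if t < y then F t y else 0
  have hG : Measurable (Function.uncurry G) :=
    Measurable.ite (measurableSet_lt measurable_fst measurable_snd) hF measurable_const
  have hleft : ∀ y, ∫⁻ t in Ioo 0 y, F t y = ∫⁻ t in Ioi 0, G t y := by
    intro y
    rw [← Ioi_inter_Iio, inter_comm, ← Measure.restrict_restrict measurableSet_Iio,
      ← lintegral_indicator measurableSet_Iio]
    simp [indicator_apply, G]
  have hright : ∀ t ∈ Ioi (0 : ℝ), ∫⁻ y in Ioi t, F t y = ∫⁻ y in Ioi 0, G t y := by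
    intro t ht
    have hIoi : Ioi t = Ioi t ∩ Ioi 0 := by rw [Ioi_inter_Ioi, sup_eq_left.2 (le_of_lt ht)]
    rw [hIoi, ← Measure.restrict_restrict measurableSet_Ioi,
      ← lintegral_indicator measurableSet_Ioi]
    simp [indicator_apply, G]
  simp_rw [hleft, setLIntegral_congr_fun measurableSet_Ioi hright]
  exact lintegral_lintegral_swap (hG.comp measurable_swap).aemeasurable

theorem lintegral_Ioi_lintegral_Ioo_mul_enorm_div_le {a b : ℝ → ℝ} (ha : Measurable a)
    (hb : AEStronglyMeasurable (fun y => b y ^ 2) (volume.restrict (Ioi 0))) {l : ℝ} (hl : 0 < l) :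
    ∫⁻ y in Ioi 0, (∫⁻ t in Ioo 0 y, ‖a t‖ₑ) * ‖b y / y‖ₑ ≤
      ENNReal.ofReal l * (∫⁻ t in Ioi 0, ENNReal.ofReal (a t ^ 2)) +
        ENNReal.ofReal l⁻¹ * ∫⁻ y in Ioi 0, ENNReal.ofReal (b y ^ 2) := by
  set A : ℝ → ℝ≥0∞ := fun t => ENNReal.ofReal l * ENNReal.ofReal (a t ^ 2)
  set B : ℝ → ℝ≥0∞ := fun y => ENNReal.ofReal l⁻¹ * ENNReal.ofReal (b y ^ 2)
  have hA : ∀ t, A t ≠ ∞ := fun _ => ENNReal.mul_ne_top ENNReal.ofReal_ne_top ENNReal.ofReal_ne_top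
  have hB : ∀ y, B y ≠ ∞ := fun _ => ENNReal.mul_ne_top ENNReal.ofReal_ne_top ENNReal.ofReal_ne_top
  calc ∫⁻ y in Ioi 0, (∫⁻ t in Ioo 0 y, ‖a t‖ₑ) * ‖b y / y‖ₑ
      = ∫⁻ y in Ioi 0, ∫⁻ t in Ioo 0 y, ‖a t‖ₑ * ‖b y / y‖ₑ := by
        simp_rw [lintegral_mul_const' _ _ enorm_ne_top]
    _ ≤ ∫⁻ y in Ioi 0, ∫⁻ t in Ioo 0 y,
          (A t * ENNReal.ofReal (√t / (2 * y * √y)) + B y * ENNReal.ofReal (1 / (2 * √t * √y))) :=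
        setLIntegral_mono' measurableSet_Ioi fun y hy => setLIntegral_mono' measurableSet_Ioo
          fun t ht => enorm_mul_enorm_div_le_schur_weights hl ht.1 hy _ _
    _ = ∫⁻ y in Ioi 0, ((∫⁻ t in Ioo 0 y, A t * ENNReal.ofReal (√t / (2 * y * √y))) + B y) := by
        refine setLIntegral_congr_fun measurableSet_Ioi fun y hy => ?_
        rw [lintegral_add_right _ (by fun_prop), lintegral_const_mul' _ _ (hB y),
          lintegral_Ioo_ofReal_inv_two_sqrt_mul_sqrt hy, mul_one]
    _ = (∫⁻ y in Ioi 0, ∫⁻ t in Ioo 0 y, A t * ENNReal.ofReal (√t / (2 * y * √y))) +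
          ∫⁻ y in Ioi 0, B y :=
        lintegral_add_right' _ (hb.aemeasurable.ennreal_ofReal.const_mul _)
    _ = (∫⁻ t in Ioi 0, A t) + ∫⁻ y in Ioi 0, B y := by
        rw [lintegral_Ioi_lintegral_Ioo_comm (by fun_prop)]
        congr 1
        refine setLIntegral_congr_fun measurableSet_Ioi fun t ht => ?_
        rw [lintegral_const_mul' _ _ (hA t), lintegral_Ioi_ofReal_sqrt_div_two_mul_mul_sqrt ht,
          mul_one]
    _ = _ := by
        rw [lintegral_const_mul' _ _ ENNReal.ofReal_ne_top,
          lintegral_const_mul' _ _ ENNReal.ofReal_ne_top]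

theorem lintegral_Ioi_enorm_div_mul_le {U g w : ℝ → ℝ} (hU0 : U 0 = 0)
    (hU : ∀ t, HasDerivAt U (g t) t)
    (hw : AEStronglyMeasurable (fun y => w y ^ 2) (volume.restrict (Ioi 0))) {l : ℝ} (hl : 0 < l) :
    ∫⁻ y in Ioi 0, ‖U y / y * w y‖ₑ ≤
      ENNReal.ofReal l * (∫⁻ t in Ioi 0, ENNReal.ofReal (g t ^ 2)) +
        ENNReal.ofReal l⁻¹ * ∫⁻ y in Ioi 0, ENNReal.ofReal (w y ^ 2) := by
  refine le_trans (setLIntegral_mono' measurableSet_Ioi fun y hy => ?_)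
    (lintegral_Ioi_lintegral_Ioo_mul_enorm_div_le (measurable_of_hasDerivAt hU) hw hl)
  have hFTC := enorm_sub_le_setLIntegral_Ioc_of_hasDerivAt hU (le_of_lt hy)
  rw [hU0, sub_zero, ← setLIntegral_congr Ioo_ae_eq_Ioc] at hFTC
  calc ‖U y / y * w y‖ₑ = ‖U y‖ₑ * ‖w y / y‖ₑ := by
        rw [← enorm_mul, div_mul_eq_mul_div, mul_div_assoc]
    _ ≤ _ := by gcongr

theorem lintegral_prod_Ioi_enorm_div_mul_le {X : Type*} [MeasurableSpace X] {μ : Measure X}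
    [SFinite μ] {U g w : X → ℝ → ℝ} (hU0 : ∀ x, U x 0 = 0)
    (hU : ∀ x t, HasDerivAt (U x) (g x t) t)
    (hg : AEStronglyMeasurable (fun p : X × ℝ => g p.1 p.2 ^ 2)
      (μ.prod (volume.restrict (Ioi 0))))
    (hw : AEStronglyMeasurable (fun p : X × ℝ => w p.1 p.2 ^ 2)
      (μ.prod (volume.restrict (Ioi 0))))
    {l : ℝ} (hl : 0 < l) :
    ∫⁻ p, ‖U p.1 p.2 / p.2 * w p.1 p.2‖ₑ ∂μ.prod (volume.restrict (Ioi 0)) ≤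
      ENNReal.ofReal l * (∫⁻ p, ENNReal.ofReal (g p.1 p.2 ^ 2) ∂μ.prod (volume.restrict (Ioi 0))) +
        ENNReal.ofReal l⁻¹ *
          ∫⁻ p, ENNReal.ofReal (w p.1 p.2 ^ 2) ∂μ.prod (volume.restrict (Ioi 0)) := by
  have hg' := hg.aemeasurable.ennreal_ofReal
  calc _ ≤ ∫⁻ x, (∫⁻ y in Ioi 0, ‖U x y / y * w x y‖ₑ) ∂μ := lintegral_prod_le _
    _ ≤ ∫⁻ x, (ENNReal.ofReal l * (∫⁻ t in Ioi 0, ENNReal.ofReal (g x t ^ 2)) +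
          ENNReal.ofReal l⁻¹ * ∫⁻ y in Ioi 0, ENNReal.ofReal (w x y ^ 2)) ∂μ :=
        lintegral_mono_ae <| hw.prodMk_left.mono fun x hx =>
          lintegral_Ioi_enorm_div_mul_le (hU0 x) (hU x) hx hl
    _ = _ := by
        rw [lintegral_add_left' (hg'.lintegral_prod_right'.const_mul _),
          lintegral_const_mul' _ _ ENNReal.ofReal_ne_top,
          lintegral_const_mul' _ _ ENNReal.ofReal_ne_top, lintegral_prod _ hg',
          lintegral_prod _ hw.aemeasurable.ennreal_ofReal]

theorem volume_restrict_setOf_snd_pos :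
    (volume : Measure (ℝ × ℝ)).restrict {p | 0 < p.2} = volume.prod (volume.restrict (Ioi 0)) := by
  rw [show {p : ℝ × ℝ | 0 < p.2} = univ ×ˢ Ioi 0 by ext; simp, Measure.volume_eq_prod,
    ← Measure.prod_restrict, Measure.restrict_univ]

theorem setLIntegral_snd_pos_enorm_div_mul_le {U g w : ℝ → ℝ → ℝ} (hU0 : ∀ x, U x 0 = 0)
    (hU : ∀ x t, HasDerivAt (U x) (g x t) t)
    (hg : Integrable (fun p : ℝ × ℝ => g p.1 p.2 ^ 2) (volume.restrict {p | 0 < p.2}))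
    (hw : Integrable (fun p : ℝ × ℝ => w p.1 p.2 ^ 2) (volume.restrict {p | 0 < p.2}))
    {l : ℝ} (hl : 0 < l) :
    ∫⁻ p in {p : ℝ × ℝ | 0 < p.2}, ‖U p.1 p.2 / p.2 * w p.1 p.2‖ₑ ≤
      ENNReal.ofReal (l * (∫ p in {p : ℝ × ℝ | 0 < p.2}, g p.1 p.2 ^ 2) +
        l⁻¹ * ∫ p in {p : ℝ × ℝ | 0 < p.2}, w p.1 p.2 ^ 2) := by
  rw [ENNReal.ofReal_add (by positivity) (by positivity), ENNReal.ofReal_mul hl.le,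
    ENNReal.ofReal_mul (inv_nonneg.2 hl.le),
    ofReal_integral_eq_lintegral_ofReal hg (ae_of_all _ fun _ => sq_nonneg _),
    ofReal_integral_eq_lintegral_ofReal hw (ae_of_all _ fun _ => sq_nonneg _),
    volume_restrict_setOf_snd_pos]
  rw [volume_restrict_setOf_snd_pos] at hg hw
  exact lintegral_prod_Ioi_enorm_div_mul_le hU0 hU hg.1 hw.1 hl

theorem abs_rpow_neg_half_mul_le_div {φ : ℝ → ℝ} {M ε y : ℝ} (hε : 0 < ε) (hy : 0 < y)
    (hφ : ∀ z, 0 ≤ z → |√(1 + z ^ 2) * φ z| ≤ M) :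
    |ε ^ (-(1 : ℝ) / 2) * φ (y / √ε)| ≤ M / y := by
  have hεz : ε ^ (-(1 : ℝ) / 2) = y / √ε / y := by
    rw [neg_div, Real.rpow_neg hε.le, ← Real.sqrt_eq_rpow]
    field_simp
  set z := y / √ε
  have hz : 0 < z := div_pos hy (Real.sqrt_pos.2 hε)
  have hz_le : z ≤ √(1 + z ^ 2) := (Real.le_sqrt hz.le (by positivity)).2 (by linarith)
  rw [hεz, le_div_iff₀ hy, abs_mul, abs_div, abs_of_pos hz, abs_of_pos hy]
  calc z / y * |φ z| * y = z * |φ z| := by field_simp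
    _ ≤ √(1 + z ^ 2) * |φ z| := by gcongr
    _ = |√(1 + z ^ 2) * φ z| := by rw [abs_mul, abs_of_nonneg (Real.sqrt_nonneg _)]
    _ ≤ M := hφ z hz.le

theorem enorm_mul_rpow_neg_half_mul_mul_le {φ : ℝ → ℝ} {M ε y : ℝ} (hε : 0 < ε) (hy : 0 < y)
    (hφ : ∀ z, 0 ≤ z → |√(1 + z ^ 2) * φ z| ≤ M) (u v : ℝ) :
    ‖u * (ε ^ (-(1 : ℝ) / 2) * φ (y / √ε)) * v‖ₑ ≤ ENNReal.ofReal M * ‖u / y * v‖ₑ := by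
  have hM : 0 ≤ M := (abs_nonneg _).trans (hφ 0 le_rfl)
  rw [Real.enorm_eq_ofReal_abs, Real.enorm_eq_ofReal_abs, ← ENNReal.ofReal_mul hM]
  refine ENNReal.ofReal_le_ofReal ?_
  calc _ ≤ |u| * (M / y) * |v| := by
        rw [abs_mul, abs_mul]
        gcongr
        exact abs_rpow_neg_half_mul_le_div hε hy hφ
    _ = M * |u / y * v| := by
        rw [abs_mul, abs_div, abs_of_pos hy]
        ring

theorem le_two_mul_sqrt_mul_sqrt_of_forall_le {C P Q : ℝ} (hP : 0 ≤ P) (hQ : 0 ≤ Q)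
    (h : ∀ l : ℝ, 0 < l → C ≤ l * P + l⁻¹ * Q) : C ≤ 2 * √P * √Q := by
  -- Perturbing by `δ` avoids the degenerate optimum `l = √(Q / P)` when `P` or `Q` vanishes.
  have hδ : ∀ δ : ℝ, 0 < δ → C ≤ 2 * √(P + δ) * √(Q + δ) := by
    intro δ hδ
    obtain ⟨a, ha, haP⟩ : ∃ a, 0 < a ∧ a ^ 2 = P + δ :=
      ⟨√(P + δ), Real.sqrt_pos.2 (by linarith), Real.sq_sqrt (by linarith)⟩
    obtain ⟨b, hb, hbQ⟩ : ∃ b, 0 < b ∧ b ^ 2 = Q + δ :=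
      ⟨√(Q + δ), Real.sqrt_pos.2 (by linarith), Real.sq_sqrt (by linarith)⟩
    calc C ≤ (b / a) * P + (b / a)⁻¹ * Q := h _ (by positivity)
      _ ≤ (b / a) * (P + δ) + (b / a)⁻¹ * (Q + δ) := by gcongr <;> linarith
      _ = 2 * √(P + δ) * √(Q + δ) := by
          rw [← haP, ← hbQ, Real.sqrt_sq ha.le, Real.sqrt_sq hb.le]
          field_simp
          ring
  have hlim : Tendsto (fun δ : ℝ => 2 * √(P + δ) * √(Q + δ)) (𝓝[>] 0) (𝓝 (2 * √P * √Q)) := by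
    have : Continuous fun δ : ℝ => 2 * √(P + δ) * √(Q + δ) := by fun_prop
    simpa using (this.tendsto 0).mono_left nhdsWithin_le_nhds
  exact ge_of_tendsto hlim (eventually_mem_nhdsWithin.mono hδ)

theorem hardy_trick_general
    (ε M : ℝ) (hε : 0 < ε) (hM : 0 ≤ M)
    (U₂ Uy W wz : ℝ → ℝ → ℝ)
    (hU₂0 : ∀ x, U₂ x 0 = 0)
    (hUy : ∀ x y, HasDerivAt (U₂ x) (Uy x y) y)
    (hbound : ∀ x z, 0 ≤ z → |Real.sqrt (1 + z ^ 2) * wz x z| ≤ M)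
    (hUyint : Integrable (fun p : ℝ × ℝ => (Uy p.1 p.2) ^ 2)
      (volume.restrict {p : ℝ × ℝ | 0 < p.2}))
    (hWint : Integrable (fun p : ℝ × ℝ => (W p.1 p.2) ^ 2)
      (volume.restrict {p : ℝ × ℝ | 0 < p.2})) :
    |∫ p in {p : ℝ × ℝ | 0 < p.2},
        U₂ p.1 p.2 * (ε ^ (-(1:ℝ)/2) * wz p.1 (p.2 / Real.sqrt ε)) * W p.1 p.2| ≤
      2 * Real.sqrt (∫ p in {p : ℝ × ℝ | 0 < p.2}, (Uy p.1 p.2) ^ 2) * M *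
        Real.sqrt (∫ p in {p : ℝ × ℝ | 0 < p.2}, (W p.1 p.2) ^ 2) := by
  set A := ∫ p in {p : ℝ × ℝ | 0 < p.2}, (Uy p.1 p.2) ^ 2
  set B := ∫ p in {p : ℝ × ℝ | 0 < p.2}, (W p.1 p.2) ^ 2
  have hA : 0 ≤ A := integral_nonneg fun _ => sq_nonneg _
  have hB : 0 ≤ B := integral_nonneg fun _ => sq_nonneg _
  refine (le_two_mul_sqrt_mul_sqrt_of_forall_le (mul_nonneg hM hA) (mul_nonneg hM hB)
    fun l hl => ?_).trans_eq ?_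
  · rw [← ENNReal.ofReal_le_ofReal_iff (by positivity), ← Real.enorm_eq_ofReal_abs]
    calc _ ≤ _ := enorm_integral_le_lintegral_enorm _
      _ ≤ ∫⁻ p in {p : ℝ × ℝ | 0 < p.2}, ENNReal.ofReal M * ‖U₂ p.1 p.2 / p.2 * W p.1 p.2‖ₑ :=
          setLIntegral_mono' (measurableSet_lt measurable_const measurable_snd) fun p hp =>
            enorm_mul_rpow_neg_half_mul_mul_le hε hp (hbound p.1) _ _
      _ = _ := lintegral_const_mul' _ _ ENNReal.ofReal_ne_top
      _ ≤ ENNReal.ofReal M * ENNReal.ofReal (l * A + l⁻¹ * B) := by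
          gcongr
          exact setLIntegral_snd_pos_enorm_div_mul_le hU₂0 hUy hUyint hWint hl
      _ = _ := by
          rw [← ENNReal.ofReal_mul hM]
          ring_nf
  · rw [Real.sqrt_mul hM, Real.sqrt_mul hM]
    linear_combination 2 * √A * √B * Real.mul_self_sqrt hM

/-- The Hardy-inequality trick for the singular boundary-layer term: for `U₂` with
zero trace and `|⟨z⟩ ∂_z w^b| ≤ M`,
`|∫ U₂ · ε^{-1/2} ∂_z w^b(x, y/√ε) · W| ≤ 2‖∂_y U₂‖ M ‖W‖`, uniformly in `ε`. -/
theorem hardy_trick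
    (ε M : ℝ) (hε : 0 < ε) (hM : 0 ≤ M)
    (U₂ Uy W wz : ℝ → ℝ → ℝ)
    (hU₂0 : ∀ x, U₂ x 0 = 0)
    (hU₂cont : Continuous fun p : ℝ × ℝ => U₂ p.1 p.2)
    (hUy : ∀ x y, HasDerivAt (U₂ x) (Uy x y) y)
    (hUycont : Continuous fun p : ℝ × ℝ => Uy p.1 p.2)
    (hWcont : Continuous fun p : ℝ × ℝ => W p.1 p.2)
    (hwzcont : Continuous fun p : ℝ × ℝ => wz p.1 p.2)
    (hbound : ∀ x z, 0 ≤ z → |Real.sqrt (1 + z ^ 2) * wz x z| ≤ M)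
    (hUyint : Integrable (fun p : ℝ × ℝ => (Uy p.1 p.2) ^ 2)
      (volume.restrict {p : ℝ × ℝ | 0 < p.2}))
    (hWint : Integrable (fun p : ℝ × ℝ => (W p.1 p.2) ^ 2)
      (volume.restrict {p : ℝ × ℝ | 0 < p.2}))
    (hprod : Integrable
      (fun p : ℝ × ℝ =>
        U₂ p.1 p.2 * (ε ^ (-(1:ℝ)/2) * wz p.1 (p.2 / Real.sqrt ε)) * W p.1 p.2)
      (volume.restrict {p : ℝ × ℝ | 0 < p.2})) :
    |∫ p in {p : ℝ × ℝ | 0 < p.2},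
        U₂ p.1 p.2 * (ε ^ (-(1:ℝ)/2) * wz p.1 (p.2 / Real.sqrt ε)) * W p.1 p.2| ≤
      2 * Real.sqrt (∫ p in {p : ℝ × ℝ | 0 < p.2}, (Uy p.1 p.2) ^ 2) * M *
        Real.sqrt (∫ p in {p : ℝ × ℝ | 0 < p.2}, (W p.1 p.2) ^ 2) :=
  hardy_trick_general ε M hε hM U₂ Uy W wz hU₂0 hUy hbound hUyint hWint
end
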